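/- For every pair (H, S) ∈ 𝒯_E, the set U_{H,S} is an open and invariant subset of the boundary path space X. -/

import Mathlib

namespace GraphLPA

/-- A directed graph: vertices, edges, and source/range maps. -/
structure DirGraph where
  V : Type
  Ed : Type
  src : Ed → V
  rng : Ed → V

/-- A vertex is a sink if it emits no edges. -/
def IsSink (G : DirGraph) (v : G.V) : Prop := ∀ e : G.Ed, G.src e ≠ v

/-- A vertex is an infinite emitter if it emits infinitely many edges. -/
def IsInfEmitter (G : DirGraph) (v : G.V) : Prop := {e : G.Ed | G.src e = v}.Infinite

/-- A vertex is regular if it is neither a sink nor an infinite emitter. -/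
def IsRegular (G : DirGraph) (v : G.V) : Prop := ¬ IsSink G v ∧ ¬ IsInfEmitter G v

/-- A (raw) finite path: a starting vertex together with a list of edges.
A vertex is regarded as the finite path with empty edge list. -/
structure FinPath (G : DirGraph) where
  start : G.V
  edges : List G.Ed

/-- The range of a finite path: the range of its last edge, or its start if it has length 0. -/
def FinPath.range {G : DirGraph} (p : FinPath G) : G.V :=
  match p.edges.getLast? with
  | none => p.start
  | some e => G.rng e

/-- The validity condition for a finite path: the first edge (if any) starts at `start`,
and consecutive edges are composable. -/
def FinPath.IsPath {G : DirGraph} (p : FinPath G) : Prop :=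
  (∀ e ∈ p.edges.head?, G.src e = p.start) ∧
    p.edges.Chain' (fun e f => G.rng e = G.src f)

/-- An infinite sequence of edges is an infinite path if consecutive edges are composable. -/
def InfIsPath (G : DirGraph) (f : ℕ → G.Ed) : Prop :=
  ∀ n, G.rng (f n) = G.src (f (n + 1))

/-- Raw boundary paths: either a finite path or an infinite sequence of edges. -/
inductive BPath (G : DirGraph) where
  | fin : FinPath G → BPath G
  | inf : (ℕ → G.Ed) → BPath G

/-- The source of a boundary path. -/
def BPath.start {G : DirGraph} : BPath G → G.V
  | .fin p => p.start
  | .inf f => G.src (f 0)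

/-- Membership in the boundary path space: a valid finite path whose range
is a sink or infinite emitter, or a valid infinite path. -/
def BPath.IsBoundary {G : DirGraph} : BPath G → Prop
  | .fin p => p.IsPath ∧ (IsSink G p.range ∨ IsInfEmitter G p.range)
  | .inf f => InfIsPath G f

/-- A vertex occurring on a boundary path (the source, or the range of any of its edges). -/
def BPath.vertexOn {G : DirGraph} : BPath G → G.V → Prop
  | .fin p, v => p.start = v ∨ ∃ e ∈ p.edges, G.rng e = v
  | .inf f, v => G.src (f 0) = v ∨ ∃ n, G.rng (f n) = v

/-- The boundary path space `X` of the graph `G`. -/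
def BPS (G : DirGraph) : Type := { x : BPath G // x.IsBoundary }

/-- Concatenation `μx` of a finite path `μ` with a boundary path `x`. -/
def FinPath.catB {G : DirGraph} (μ : FinPath G) : BPath G → BPath G
  | .fin p => .fin ⟨μ.start, μ.edges ++ p.edges⟩
  | .inf f => .inf (fun n => if h : n < μ.edges.length then μ.edges[n] else f (n - μ.edges.length))

/-- The cylinder set `Z(μ) = {μx : x ∈ X, s(x) = r(μ)}`. -/
def ZSet {G : DirGraph} (μ : FinPath G) : Set (BPS G) :=
  { x | ∃ z : BPS G, z.1.start = μ.range ∧ x.1 = μ.catB z.1 }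

/-- The finite path `μe` obtained by appending an edge. -/
def FinPath.extend {G : DirGraph} (μ : FinPath G) (e : G.Ed) : FinPath G :=
  ⟨μ.start, μ.edges ++ [e]⟩

/-- The basic set `Z(μ∖F) = Z(μ) ∖ ⋃_{e ∈ F} Z(μe)`. -/
def ZSetMinus {G : DirGraph} (μ : FinPath G) (F : Finset G.Ed) : Set (BPS G) :=
  ZSet μ \ ⋃ e ∈ F, ZSet (μ.extend e)

/-- The topology on the boundary path space generated by the sets `Z(μ∖F)`. -/
instance BPS.instTopologicalSpace (G : DirGraph) : TopologicalSpace (BPS G) :=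
  TopologicalSpace.generateFrom
    { U | ∃ (μ : FinPath G) (F : Finset G.Ed),
        μ.IsPath ∧ (∀ e ∈ F, G.src e = μ.range) ∧ U = ZSetMinus μ F }

/-- A subset `U ⊆ X` is invariant if whenever `αz ∈ U` with `α, β` finite paths with
`r(α) = r(β)` and `s(z) = r(α)`, then `βz ∈ U`. -/
def IsInvariant {G : DirGraph} (U : Set (BPS G)) : Prop :=
  ∀ α β : FinPath G, α.IsPath → β.IsPath → α.range = β.range →
    ∀ z : BPS G, z.1.start = α.range →
      ∀ x y : BPS G, x.1 = α.catB z.1 → y.1 = β.catB z.1 → x ∈ U → y ∈ U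

/-- A set of vertices is hereditary if it is closed under ranges of edges out of it. -/
def Hereditary (G : DirGraph) (H : Set G.V) : Prop :=
  ∀ e : G.Ed, G.src e ∈ H → G.rng e ∈ H

/-- A set of vertices is saturated if it contains every regular vertex all of whose
emitted edges have range in it. -/
def Saturated (G : DirGraph) (H : Set G.V) : Prop :=
  ∀ v : G.V, IsRegular G v → (∀ e : G.Ed, G.src e = v → G.rng e ∈ H) → v ∈ H

/-- The set `B_H` of breaking vertices of a hereditary set `H`. -/
def BreakVerts (G : DirGraph) (H : Set G.V) : Set G.V :=
  { v | v ∉ H ∧ IsInfEmitter G v ∧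
      { e : G.Ed | G.src e = v ∧ G.rng e ∉ H }.Finite ∧
      { e : G.Ed | G.src e = v ∧ G.rng e ∉ H }.Nonempty }

/-- `U_H`: the boundary paths on which some vertex of `H` occurs. -/
def UH {G : DirGraph} (H : Set G.V) : Set (BPS G) :=
  { x | ∃ v ∈ H, x.1.vertexOn v }

/-- `U_S`: the boundary paths that are finite paths with range in `S`. -/
def US {G : DirGraph} (S : Set G.V) : Set (BPS G) :=
  { x | ∃ p : FinPath G, x.1 = BPath.fin p ∧ p.range ∈ S }

/-- `U_{H,S} = U_H ∪ U_S`. -/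
def UHS {G : DirGraph} (H S : Set G.V) : Set (BPS G) := UH H ∪ US S

/-- `H_U = {v : Z(v) ⊆ U}`. -/
def HOf {G : DirGraph} (U : Set (BPS G)) : Set G.V :=
  { v | ZSet (⟨v, []⟩ : FinPath G) ⊆ U }

/-- `S_U`: ranges of finite paths in `U` whose range is an infinite emitter not in `H_U`. -/
def SOf {G : DirGraph} (U : Set (BPS G)) : Set G.V :=
  { w | ∃ x ∈ U, ∃ p : FinPath G, x.1 = BPath.fin p ∧ p.range = w ∧
      IsInfEmitter G w ∧ w ∉ HOf U }

/-- `Path(v, H)`: the finite paths of positive length with source `v` and range in `H`. -/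
def PathTo {G : DirGraph} (v : G.V) (H : Set G.V) : Set (FinPath G) :=
  { p | p.IsPath ∧ p.start = v ∧ p.edges ≠ [] ∧ p.range ∈ H }

/-- Condition (a): every infinite path all of whose vertices lie outside `H`
eventually does not connect to `H`. -/
def CondA (G : DirGraph) (H : Set G.V) : Prop :=
  ∀ f : ℕ → G.Ed, InfIsPath G f →
    (G.src (f 0) ∉ H ∧ ∀ n, G.rng (f n) ∉ H) →
    ∃ N : ℕ, PathTo (G.rng (f N)) H = ∅

/-- Condition (b) with target set `S`: every vertex emitting infinitely many edges
that connect to `H` belongs to `H ∪ S`. -/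
def CondB (G : DirGraph) (H S : Set G.V) : Prop :=
  ∀ v : G.V,
    { e : G.Ed | G.src e = v ∧ (PathTo (G.rng e) H).Nonempty }.Infinite → v ∈ H ∪ S

/-- An `H`-compatible path: a finite path of positive length with range in `H`
whose last edge has source outside `H ∪ B_H`. -/
def HCompatible {G : DirGraph} (H : Set G.V) (p : FinPath G) : Prop :=
  p.IsPath ∧ p.edges ≠ [] ∧ p.range ∈ H ∧
    ∀ e ∈ p.edges.getLast?, G.src e ∉ H ∪ BreakVerts G H

/-- `C_{v,H}`: the set of `H`-compatible paths with source `v`. -/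
def CSet {G : DirGraph} (v : G.V) (H : Set G.V) : Set (FinPath G) :=
  { p | p.start = v ∧ HCompatible H p }

end GraphLPA

namespace GraphLPA


variable {G : DirGraph}

lemma range_nil (s : G.V) : (⟨s, []⟩ : FinPath G).range = s := rfl

lemma range_cons (s : G.V) (e : G.Ed) (l : List G.Ed) :
    (⟨s, e :: l⟩ : FinPath G).range = (⟨G.rng e, l⟩ : FinPath G).range := by
  cases l with
  | nil => rfl
  | cons f l' =>
      obtain ⟨a, ha⟩ : ∃ a, (f :: l').getLast? = some a :=
        ⟨_, List.getLast?_eq_getLast (by simp)⟩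
      simp [FinPath.range, ha]

lemma range_append (s : G.V) (l₁ l₂ : List G.Ed) :
    (⟨s, l₁ ++ l₂⟩ : FinPath G).range =
      (⟨(⟨s, l₁⟩ : FinPath G).range, l₂⟩ : FinPath G).range := by
  induction l₁ generalizing s with
  | nil => simp [range_nil]
  | cons e l ih => rw [List.cons_append, range_cons, range_cons, ih]

lemma range_eta (p : FinPath G) : (⟨p.start, p.edges⟩ : FinPath G).range = p.range := rfl

lemma isPath_nil (s : G.V) : (⟨s, []⟩ : FinPath G).IsPath := by
  constructor <;> simp [FinPath.IsPath, List.Chain']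

lemma isPath_cons {s : G.V} {e : G.Ed} {l : List G.Ed} :
    (⟨s, e :: l⟩ : FinPath G).IsPath ↔ G.src e = s ∧ (⟨G.rng e, l⟩ : FinPath G).IsPath := by
  simp only [FinPath.IsPath, List.head?_cons, List.Chain', List.isChain_cons, Option.mem_def,
    Option.some.injEq, forall_eq']
  constructor
  · rintro ⟨h1, h2, h3⟩; exact ⟨h1, fun f hf => (h2 f hf).symm, h3⟩
  · rintro ⟨h1, h2, h3⟩; exact ⟨h1, fun f hf => (h2 f hf).symm, h3⟩

lemma isPath_append {s : G.V} {l₁ l₂ : List G.Ed} :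
    (⟨s, l₁ ++ l₂⟩ : FinPath G).IsPath ↔
      (⟨s, l₁⟩ : FinPath G).IsPath ∧ (⟨(⟨s, l₁⟩ : FinPath G).range, l₂⟩ : FinPath G).IsPath := by
  induction l₁ generalizing s with
  | nil => simp [isPath_nil, range_nil]
  | cons e l ih =>
      rw [List.cons_append, isPath_cons, isPath_cons, range_cons, ih, and_assoc]

/-- Hereditary propagation: if a vertex of `H` occurs on a valid finite path,
then its range is in `H`. -/
lemma range_mem_of_vertexOn {H : Set G.V} (hher : Hereditary G H) :
    ∀ (l : List G.Ed) (s : G.V), (⟨s, l⟩ : FinPath G).IsPath →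
      (s ∈ H ∨ ∃ e ∈ l, G.rng e ∈ H) → (⟨s, l⟩ : FinPath G).range ∈ H := by
  intro l
  induction l with
  | nil =>
      rintro s _ (hs | ⟨e, he, _⟩)
      · exact hs
      · simp at he
  | cons e l ih =>
      rintro s hp hon
      rw [isPath_cons] at hp
      rw [range_cons]
      rcases hon with hs | ⟨f, hf, hfH⟩
      · exact ih _ hp.2 (Or.inl (hher e (hp.1 ▸ hs)))
      · rcases List.mem_cons.1 hf with rfl | hf
        · exact ih _ hp.2 (Or.inl hfH)
        · exact ih _ hp.2 (Or.inr ⟨f, hf, hfH⟩)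

lemma vertexOn_catB_range (μ : FinPath G) (z : BPath G) (hz : z.start = μ.range) :
    (μ.catB z).vertexOn μ.range := by
  cases z with
  | fin q =>
      by_cases h : μ.edges = []
      · left
        simp only [FinPath.range, h, List.getLast?_nil]
      · right
        refine ⟨μ.edges.getLast h, List.mem_append_left _ (List.getLast_mem h), ?_⟩
        simp [FinPath.range, List.getLast?_eq_getLast h]
  | inf f =>
      by_cases h : μ.edges = []
      · left
        simp only [FinPath.catB, h, List.length_nil, Nat.not_lt_zero, dite_false, Nat.sub_zero]
        simpa [BPath.start, FinPath.range, h] using hz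
      · right
        have hlen : 0 < μ.edges.length := List.length_pos_iff.2 h
        refine ⟨μ.edges.length - 1, ?_⟩
        have hlt : μ.edges.length - 1 < μ.edges.length := by omega
        simp only [FinPath.catB, hlt, dite_true]
        rw [← List.getLast_eq_getElem h]
        simp [FinPath.range, List.getLast?_eq_getLast h]

lemma src_getElem_zero {μ : FinPath G} (hμ : μ.IsPath) (h : 0 < μ.edges.length) :
    G.src μ.edges[0] = μ.start := by
  apply hμ.1
  rw [List.head?_eq_getElem?]
  simp [List.getElem?_eq_getElem h]

/-- Decomposition of the vertices on a concatenation. -/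
lemma vertexOn_catB {μ : FinPath G} (hμ : μ.IsPath) {z : BPath G} (hz : z.start = μ.range)
    {v : G.V} :
    (μ.catB z).vertexOn v ↔ (BPath.fin μ).vertexOn v ∨ z.vertexOn v := by
  cases z with
  | fin q =>
      constructor
      · rintro (hs | ⟨e, he, hre⟩)
        · exact Or.inl (Or.inl hs)
        · rcases List.mem_append.1 he with he | he
          · exact Or.inl (Or.inr ⟨e, he, hre⟩)
          · exact Or.inr (Or.inr ⟨e, he, hre⟩)
      · rintro ((hs | ⟨e, he, hre⟩) | (hs | ⟨e, he, hre⟩))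
        · exact Or.inl hs
        · exact Or.inr ⟨e, List.mem_append_left _ he, hre⟩
        · -- q.start = v, but q.start = μ.range
          have := vertexOn_catB_range μ (BPath.fin q) hz
          rwa [show μ.range = v from hs ▸ hz.symm ▸ rfl] at this
        · exact Or.inr ⟨e, List.mem_append_right _ he, hre⟩
  | inf f =>
      constructor
      · rintro (hs | ⟨n, hn⟩)
        · by_cases h : μ.edges = []
          · right; left
            simpa only [FinPath.catB, h, List.length_nil, Nat.not_lt_zero, dite_false,
              Nat.sub_zero] using hs
          · left; left
            have h0 : 0 < μ.edges.length := List.length_pos_iff.2 h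
            simp only [FinPath.catB, h0, dite_true] at hs
            exact (src_getElem_zero hμ h0).symm.trans hs
        · by_cases h : n < μ.edges.length
          · simp only [FinPath.catB, h, dite_true] at hn
            exact Or.inl (Or.inr ⟨_, List.getElem_mem _, hn⟩)
          · simp only [FinPath.catB, h, dite_false] at hn
            exact Or.inr (Or.inr ⟨_, hn⟩)
      · rintro ((hs | ⟨e, he, hre⟩) | (hs | ⟨n, hn⟩))
        · by_cases h : μ.edges = []
          · left
            simp only [FinPath.catB, h, List.length_nil, Nat.not_lt_zero, dite_false, Nat.sub_zero]
            rw [← hs]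
            simpa [BPath.start, FinPath.range, h] using hz
          · left
            have h0 : 0 < μ.edges.length := List.length_pos_iff.2 h
            simp only [FinPath.catB, h0, dite_true]
            exact (src_getElem_zero hμ h0).trans hs
        · rcases List.mem_iff_getElem.1 he with ⟨i, hi, hie⟩
          right
          exact ⟨i, by simp only [FinPath.catB, hi, dite_true]; rw [hie]; exact hre⟩
        · -- src (f 0) = v, i.e. z.start = v = μ.range
          have := vertexOn_catB_range μ (BPath.inf f) hz
          rwa [show μ.range = v from hs ▸ hz.symm ▸ rfl] at this
        · right
          refine ⟨n + μ.edges.length, ?_⟩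
          have h : ¬ (n + μ.edges.length < μ.edges.length) := by omega
          simp only [FinPath.catB, h, dite_false, Nat.add_sub_cancel]
          exact hn

lemma zsetMinus_empty (μ : FinPath G) : ZSetMinus μ (∅ : Finset G.Ed) = ZSet μ := by
  simp [ZSetMinus]

lemma zsub_UH {H : Set G.V} {μ : FinPath G} (hv : μ.range ∈ H) : ZSet μ ⊆ UH H := by
  rintro y ⟨z, hz, hy⟩
  exact ⟨μ.range, hv, by rw [hy]; exact vertexOn_catB_range μ z.1 hz⟩

lemma range_extend (p : FinPath G) (e : G.Ed) : (p.extend e).range = G.rng e := by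
  simp [FinPath.extend, FinPath.range, List.getLast?_concat]

/-- STATEMENT 2x -/
theorem statement_2' (G : DirGraph) (H S : Set G.V)
    (hher : Hereditary G H) (hsat : Saturated G H) (hS : S ⊆ BreakVerts G H) :
    IsOpen (UHS H S) ∧ IsInvariant (UHS H S) := by
  constructor
  · -- openness
    have step : ∀ (x : BPS G), (∃ μ : FinPath G, μ.IsPath ∧ μ.range ∈ H ∧ x ∈ ZSet μ) →
        ∃ B : Set (BPS G),
          (∃ (μ : FinPath G) (F : Finset G.Ed),
            μ.IsPath ∧ (∀ e ∈ F, G.src e = μ.range) ∧ B = ZSetMinus μ F) ∧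
          x ∈ B ∧ B ⊆ UHS H S := by
      rintro x ⟨μ, hμp, hμH, hxμ⟩
      refine ⟨ZSetMinus μ (∅ : Finset G.Ed), ⟨μ, ∅, hμp, by simp, rfl⟩, ?_, ?_⟩
      · rw [zsetMinus_empty]; exact hxμ
      · rw [zsetMinus_empty]
        exact fun y hy => Set.mem_union_left _ (zsub_UH hμH hy)
    have hbasic : ∀ x ∈ UHS H S, ∃ B : Set (BPS G),
        (∃ (μ : FinPath G) (F : Finset G.Ed),
          μ.IsPath ∧ (∀ e ∈ F, G.src e = μ.range) ∧ B = ZSetMinus μ F) ∧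
        x ∈ B ∧ B ⊆ UHS H S := by
      rintro x (⟨v, hvH, hvon⟩ | ⟨p, hpfin, hpS⟩)
      · -- x ∈ U_H
        apply step
        obtain ⟨xp, hxb⟩ := x
        cases xp with
        | fin p =>
            rcases hvon with hs | ⟨e, he, hre⟩
            · refine ⟨⟨v, []⟩, isPath_nil v, by rw [range_nil]; exact hvH, ?_⟩
              refine ⟨⟨BPath.fin p, hxb⟩, by simp [BPath.start, range_nil, hs], ?_⟩
              show BPath.fin p = BPath.fin ⟨v, [] ++ p.edges⟩
              rw [List.nil_append, ← hs]
            · obtain ⟨l₁, l₂, hsplit⟩ := List.append_of_mem he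
              have hP : (⟨p.start, (l₁ ++ [e]) ++ l₂⟩ : FinPath G).IsPath := by
                rw [← List.append_cons, ← hsplit]; exact hxb.1
              rw [isPath_append] at hP
              have hrng : (⟨p.start, l₁ ++ [e]⟩ : FinPath G).range = G.rng e := by
                simp [FinPath.range, List.getLast?_concat]
              have hrange2 : (⟨G.rng e, l₂⟩ : FinPath G).range = p.range := by
                have h1 : p.range = (⟨p.start, (l₁ ++ [e]) ++ l₂⟩ : FinPath G).range := by
                  rw [← List.append_cons, ← hsplit]
                rw [h1, range_append, hrng]
              refine ⟨⟨p.start, l₁ ++ [e]⟩, hP.1, by rw [hrng, hre]; exact hvH, ?_⟩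
              refine ⟨⟨BPath.fin ⟨G.rng e, l₂⟩, ?_, ?_⟩, ?_, ?_⟩
              · exact hrng ▸ hP.2
              · rw [hrange2]; exact hxb.2
              · show G.rng e = _
                rw [hrng]
              · show BPath.fin p = BPath.fin ⟨p.start, (l₁ ++ [e]) ++ l₂⟩
                rw [← List.append_cons, ← hsplit]
        | inf f =>
            rcases hvon with hs | ⟨n, hn⟩
            · refine ⟨⟨v, []⟩, isPath_nil v, by rw [range_nil]; exact hvH, ?_⟩
              refine ⟨⟨BPath.inf f, hxb⟩, by simp [BPath.start, range_nil, hs], ?_⟩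
              show BPath.inf f = FinPath.catB _ (BPath.inf f)
              simp [FinPath.catB]
            · set L : List G.Ed := (List.range (n+1)).map f with hL
              have hlen : L.length = n + 1 := by simp [hL]
              have hget : ∀ m (hm : m < L.length), L[m] = f m := by
                intro m hm
                simp [hL]
              have hpath : (⟨G.src (f 0), L⟩ : FinPath G).IsPath := by
                constructor
                · intro e he
                  rw [List.head?_eq_getElem?] at he
                  have h0 : 0 < L.length := by omega
                  rw [List.getElem?_eq_getElem h0, hget 0 h0] at he
                  cases he
                  rfl
                · rw [hL, List.Chain', List.isChain_map, List.isChain_range_succ]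
                  intro m _
                  exact hxb m
              have hrng : (⟨G.src (f 0), L⟩ : FinPath G).range = G.rng (f n) := by
                have hne : L ≠ [] := by
                  intro h; rw [h] at hlen; simp at hlen
                have : L.getLast hne = f n := by
                  rw [List.getLast_eq_getElem]
                  have : L.length - 1 < L.length := by omega
                  rw [hget _ this, hlen, Nat.add_sub_cancel]
                simp [FinPath.range, List.getLast?_eq_getLast hne, this]
              refine ⟨⟨G.src (f 0), L⟩, hpath, by rw [hrng, hn]; exact hvH, ?_⟩
              refine ⟨⟨BPath.inf (fun m => f (m + (n+1))), ?_⟩, ?_, ?_⟩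
              · intro m
                show G.rng (f (m + (n+1))) = G.src (f ((m+1) + (n+1)))
                rw [show m + 1 + (n+1) = m + (n+1) + 1 from by omega]
                exact hxb (m + (n+1))
              · show G.src (f (0 + (n+1))) = _
                rw [hrng, show 0 + (n+1) = n + 1 from by omega]
                exact (hxb n).symm
              · show BPath.inf f = FinPath.catB _ _
                simp only [FinPath.catB]
                congr 1
                funext m
                by_cases h : m < L.length
                · rw [dif_pos h, hget m h]
                · rw [dif_neg h, hlen]
                  rw [show m - (n+1) + (n+1) = m from by omega]
      · -- x ∈ U_S
        obtain ⟨xp, hxb⟩ := x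
        simp only at hpfin
        subst hpfin
        obtain ⟨hwH, hinf, hfin, -⟩ := hS hpS
        set w := p.range with hw
        refine ⟨ZSetMinus p hfin.toFinset, ⟨p, hfin.toFinset, hxb.1, ?_, rfl⟩, ?_, ?_⟩
        · intro e he
          exact ((Set.Finite.mem_toFinset hfin).1 he).1
        · constructor
          · refine ⟨⟨BPath.fin ⟨w, []⟩, isPath_nil w, Or.inr hinf⟩, rfl, ?_⟩
            show BPath.fin p = BPath.fin ⟨p.start, p.edges ++ []⟩
            rw [List.append_nil]
          · intro hmem
            replace hmem := Set.mem_iUnion₂.1 hmem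
            obtain ⟨e, heF, z', hz', hxe⟩ := hmem
            cases hz1 : z'.1 with
            | fin q' =>
                rw [hz1] at hxe
                have : p = ⟨p.start, (p.edges ++ [e]) ++ q'.edges⟩ := by
                  injection hxe
                have hlen := congrArg (fun t => t.edges.length) this
                simp at hlen
            | inf g =>
                rw [hz1] at hxe
                exact absurd hxe (by simp [FinPath.catB])
        · rintro y ⟨⟨z', hz'start, hy⟩, hnot⟩
          obtain ⟨zp, hzb⟩ := z'
          cases zp with
          | fin q =>
              obtain ⟨qs, qe⟩ := q
              cases qe with
              | nil =>
                  refine Or.inr ⟨⟨p.start, p.edges ++ []⟩, hy, ?_⟩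
                  have : (⟨p.start, p.edges ++ []⟩ : FinPath G).range = p.range := by
                    rw [List.append_nil]
                  rw [this]; exact hpS
              | cons e rest =>
                  have hqs : qs = w := hz'start
                  have hse : G.src e = w := by
                    rw [← hqs]; exact (isPath_cons.1 hzb.1).1
                  by_cases hre : G.rng e ∈ H
                  · refine Or.inl ⟨G.rng e, hre, ?_⟩
                    rw [hy]
                    exact Or.inr ⟨e, List.mem_append_right _ List.mem_cons_self, rfl⟩
                  · exfalso
                    have heF : e ∈ hfin.toFinset :=
                      (Set.Finite.mem_toFinset hfin).2 ⟨hse, hre⟩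
                    apply hnot
                    apply Set.mem_biUnion heF
                    have hb2 : IsSink G ((⟨G.rng e, rest⟩ : FinPath G).range) ∨
                        IsInfEmitter G ((⟨G.rng e, rest⟩ : FinPath G).range) := by
                      rw [← range_cons]; exact hzb.2
                    refine ⟨⟨BPath.fin ⟨G.rng e, rest⟩, (isPath_cons.1 hzb.1).2, hb2⟩, ?_, ?_⟩
                    · show G.rng e = (p.extend e).range
                      rw [range_extend]
                    · rw [hy]
                      show BPath.fin ⟨p.start, p.edges ++ (e :: rest)⟩ =
                        BPath.fin ⟨p.start, (p.edges ++ [e]) ++ rest⟩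
                      rw [← List.append_cons]
          | inf f =>
              have hsf : G.src (f 0) = w := hz'start
              by_cases hre : G.rng (f 0) ∈ H
              · refine Or.inl ⟨G.rng (f 0), hre, ?_⟩
                rw [hy]
                refine Or.inr ⟨p.edges.length, ?_⟩
                simp [FinPath.catB]
              · exfalso
                have heF : f 0 ∈ hfin.toFinset :=
                  (Set.Finite.mem_toFinset hfin).2 ⟨hsf, hre⟩
                apply hnot
                apply Set.mem_biUnion heF
                refine ⟨⟨BPath.inf (fun m => f (m + 1)), fun m => hzb (m + 1)⟩, ?_, ?_⟩
                · show G.src (f (0 + 1)) = (p.extend (f 0)).range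
                  rw [range_extend, show (0:ℕ) + 1 = 1 from rfl]
                  exact (hzb 0).symm
                · rw [hy]
                  show FinPath.catB p (BPath.inf f) = _
                  simp only [FinPath.catB, FinPath.extend]
                  congr 1
                  funext m
                  have hlen2 : (p.edges ++ [f 0]).length = p.edges.length + 1 := by simp
                  by_cases h1 : m < p.edges.length
                  · simp only [dif_pos h1, dif_pos (show m < (p.edges ++ [f 0]).length by omega),
                      List.getElem_append_left h1]
                  · by_cases h3 : m = p.edges.length
                    · simp only [dif_neg h1, dif_pos (show m < (p.edges ++ [f 0]).length by omega),
                        List.getElem_append_right (show p.edges.length ≤ m by omega)]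
                      simp [h3]
                    · rw [dif_neg h1]
                      refine Eq.trans ?_ (dif_neg (show ¬ m < (p.edges ++ [f 0]).length by omega)).symm
                      congr 1
                      omega
    have heq : UHS H S = ⋃₀ {B | (∃ (μ : FinPath G) (F : Finset G.Ed),
        μ.IsPath ∧ (∀ e ∈ F, G.src e = μ.range) ∧ B = ZSetMinus μ F) ∧ B ⊆ UHS H S} := by
      apply Set.Subset.antisymm
      · intro x hx
        rcases hbasic x hx with ⟨B, hB1, hxB, hBsub⟩
        exact ⟨B, ⟨hB1, hBsub⟩, hxB⟩
      · rintro x ⟨B, ⟨-, hBsub⟩, hxB⟩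
        exact hBsub hxB
    rw [heq]
    exact TopologicalSpace.GenerateOpen.sUnion _
      (fun B hB => TopologicalSpace.GenerateOpen.basic B hB.1)
  · -- invariance
    intro α β hα hβ hr z hz x y hx hy hxU
    rcases hxU with ⟨v, hvH, hvon⟩ | ⟨p, hpfin, hpS⟩
    · rw [hx] at hvon
      rcases (vertexOn_catB hα hz).1 hvon with hon | hon
      · have hrange : α.range ∈ H := by
          apply range_mem_of_vertexOn hher α.edges α.start hα
          rcases hon with h | ⟨e, he, hre⟩
          · exact Or.inl (by rw [h]; exact hvH)
          · exact Or.inr ⟨e, he, by rw [hre]; exact hvH⟩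
        refine Or.inl ⟨β.range, hr ▸ hrange, ?_⟩
        rw [hy]
        exact vertexOn_catB_range β z.1 (hr ▸ hz)
      · refine Or.inl ⟨v, hvH, ?_⟩
        rw [hy]
        exact (vertexOn_catB hβ (hr ▸ hz)).2 (Or.inr hon)
    · rw [hx] at hpfin
      cases hz1 : z.1 with
      | inf f =>
          rw [hz1] at hpfin
          exact absurd hpfin (by simp [FinPath.catB])
      | fin q =>
          rw [hz1] at hpfin
          have hpq : p = ⟨α.start, α.edges ++ q.edges⟩ := by
            injection hpfin with h; exact h.symm
          have hqs : q.start = α.range := by rw [hz1] at hz; exact hz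
          have key : ∀ γ : FinPath G, γ.range = q.start →
              (⟨γ.start, γ.edges ++ q.edges⟩ : FinPath G).range = q.range := by
            intro γ hγ
            rw [range_append, range_eta, hγ]
          refine Or.inr ⟨⟨β.start, β.edges ++ q.edges⟩, by rw [hy, hz1]; rfl, ?_⟩
          rw [key β (by rw [← hr]; exact hqs.symm), ← key α hqs.symm, ← hpq]
          exact hpS

/-- for `(H,S) ∈ 𝒯_E`, the set `U_{H,S}` is open and invariant. -/
theorem statement_2 (G : DirGraph) (H S : Set G.V)
    (hher : Hereditary G H) (hsat : Saturated G H) (hS : S ⊆ BreakVerts G H) :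
    IsOpen (UHS H S) ∧ IsInvariant (UHS H S) := by
  exact statement_2' G H S hher hsat hS

end GraphLPA
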